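/- arXiv:2301.04372 — 7 statements merged into one kernel-verified Lean document; each statement's English description precedes it below -/
import Mathlib

section
/- Let γ : [0, τ] → S be a smooth curve on the sphere S of radius r > 0 centered at the origin in a finite-dimensional real inner product space. Then τ · (1/τ) ∫₀^τ ‖γ'(t)‖ dt ≥ r · arccos(⟨γ(0), γ(τ)⟩ / r²); i.e., the length of γ is at least the geodesic (great-circle) distance between its endpoints. -/
/-!
Put `φ t = angle (γ a) (γ t)`. By the triangle inequality for angles, the right Dini
derivative of `‖γ a‖ * φ` at `t` is at most the limit of `‖γ t‖ * angle (γ t) (γ s) / (s - t)`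
as `s ↓ t`. A chord of a sphere of radius `r` subtending the angle `θ` has length
`2 r sin (θ / 2) ≥ r θ (1 - θ² / 24)`, so short chords are almost as long as their arcs and
this limit is at most `‖γ' t‖`. A comparison principle for right derivatives then bounds
`‖γ a‖ * φ` by the arclength `∫ ‖γ'‖`.
-/

open scoped InnerProductSpace

open Real Set Filter Topology MeasureTheory InnerProductGeometry

section

variable {E : Type*} [NormedAddCommGroup E] [InnerProductSpace ℝ E]

theorem ContinuousAt.angle {α : Type*} [TopologicalSpace α] {f g : α → E} {x : α}
    (hf : ContinuousAt f x) (hg : ContinuousAt g x) (hf0 : f x ≠ 0) (hg0 : g x ≠ 0) :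
    ContinuousAt (fun y => InnerProductGeometry.angle (f y) (g y)) x :=
  (continuousAt_angle (x := (f x, g x)) hf0 hg0).comp (f := fun y => (f y, g y)) (hf.prodMk hg)

theorem norm_sub_eq_two_mul_norm_mul_sin_angle_div_two {x y : E} (h : ‖x‖ = ‖y‖) :
    ‖x - y‖ = 2 * ‖x‖ * sin (angle x y / 2) := by
  have hsin : 0 ≤ sin (angle x y / 2) :=
    sin_nonneg_of_nonneg_of_le_pi (by linarith [angle_nonneg x y])
      (by linarith [angle_le_pi x y, pi_pos])
  have hcos : cos (angle x y) = 1 - 2 * sin (angle x y / 2) ^ 2 := by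
    have := cos_sq_add_sin_sq (angle x y / 2)
    conv_lhs => rw [← mul_div_cancel₀ (angle x y) two_ne_zero, cos_two_mul']
    linarith
  rw [← sq_eq_sq₀ (norm_nonneg _) (by positivity), norm_sub_sq_real,
    ← cos_angle_mul_norm_mul_norm, hcos, ← h]
  ring

theorem angle_sq_lt_24 (x y : E) : angle x y ^ 2 < 24 := by
  nlinarith [angle_nonneg x y, angle_le_pi x y, pi_lt_four]

theorem norm_mul_angle_mul_le_norm_sub {x y : E} (h : ‖x‖ = ‖y‖) :
    ‖x‖ * angle x y * (1 - angle x y ^ 2 / 24) ≤ ‖x - y‖ := by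
  have hsin := sin_ge_sub_cube (x := angle x y / 2) (by linarith [angle_nonneg x y])
  rw [norm_sub_eq_two_mul_norm_mul_sin_angle_div_two h]
  nlinarith [norm_nonneg x]

theorem eventually_norm_mul_angle_lt {γ : ℝ → E} {v : E} {t ρ : ℝ} (hγ : HasDerivAt γ v t)
    (hnorm : ∀ᶠ s in 𝓝[>] t, ‖γ s‖ = ‖γ t‖) (hρ : ‖v‖ < ρ) :
    ∀ᶠ s in 𝓝[>] t, ‖γ t‖ * angle (γ t) (γ s) < ρ * (s - t) := by
  rcases eq_or_ne (γ t) 0 with h0 | h0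
  · have hρ0 : 0 < ρ := (norm_nonneg v).trans_lt hρ
    filter_upwards [self_mem_nhdsWithin] with s (hs : t < s)
    simpa [h0] using mul_pos hρ0 (sub_pos.2 hs)
  have hangle : Tendsto (fun s => angle (γ t) (γ s)) (𝓝[>] t) (𝓝 0) := by
    rw [← angle_self h0]
    exact (continuousAt_const.angle hγ.continuousAt h0 h0).tendsto.mono_left nhdsWithin_le_nhds
  have hslope : Tendsto (fun s => ‖slope γ t s‖) (𝓝[>] t) (𝓝 ‖v‖) :=
    ((hasDerivAt_iff_tendsto_slope.1 hγ).mono_left (nhdsGT_le_nhdsNE t)).norm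
  have hfactor : Tendsto (fun s => ρ * (1 - angle (γ t) (γ s) ^ 2 / 24)) (𝓝[>] t) (𝓝 ρ) := by
    simpa using (((hangle.pow 2).div_const 24).const_sub 1).const_mul ρ
  filter_upwards [hnorm, hslope.eventually_lt hfactor hρ, self_mem_nhdsWithin]
    with s hs hlt (hts : t < s)
  have hpos : 0 < 1 - angle (γ t) (γ s) ^ 2 / 24 := by linarith [angle_sq_lt_24 (γ t) (γ s)]
  refine lt_of_mul_lt_mul_right ?_ hpos.le
  calc ‖γ t‖ * angle (γ t) (γ s) * (1 - angle (γ t) (γ s) ^ 2 / 24)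
      ≤ ‖γ s - γ t‖ := by
        rw [norm_sub_rev]; exact norm_mul_angle_mul_le_norm_sub hs.symm
    _ = ‖slope γ t s‖ * (s - t) := by
        rw [slope_def_module, norm_smul, norm_inv, Real.norm_of_nonneg (sub_pos.2 hts).le]
        field_simp [(sub_pos.2 hts).ne']
    _ < ρ * (1 - angle (γ t) (γ s) ^ 2 / 24) * (s - t) :=
        mul_lt_mul_of_pos_right hlt (sub_pos.2 hts)
    _ = ρ * (s - t) * (1 - angle (γ t) (γ s) ^ 2 / 24) := by ring

theorem norm_mul_angle_le_integral_norm_deriv {γ γ' : ℝ → E} {a b : ℝ} (hab : a ≤ b)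
    (hderiv : ∀ t ∈ Icc a b, HasDerivAt γ (γ' t) t) (hcont : ContinuousOn γ' (Icc a b))
    (hnorm : ∀ t ∈ Icc a b, ‖γ t‖ = ‖γ a‖) :
    ‖γ a‖ * angle (γ a) (γ b) ≤ ∫ t in a..b, ‖γ' t‖ := by
  rcases eq_or_ne (γ a) 0 with h0 | h0
  · simpa [h0] using intervalIntegral.integral_nonneg hab fun t _ => norm_nonneg (γ' t)
  have hne : ∀ t ∈ Icc a b, γ t ≠ 0 := fun t ht => by
    rw [← norm_ne_zero_iff, hnorm t ht]; exact norm_ne_zero_iff.2 h0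
  have hint : IntervalIntegrable (fun t => ‖γ' t‖) volume a b :=
    hcont.norm.intervalIntegrable_of_Icc hab
  refine image_le_of_liminf_slope_right_le_deriv_boundary
    (f := fun t => ‖γ a‖ * angle (γ a) (γ t)) (B := fun t => ∫ s in a..t, ‖γ' s‖)
    (B' := fun t => ‖γ' t‖)
    (fun t ht => (continuousAt_const.mul (continuousAt_const.angle (hderiv t ht).continuousAt h0
      (hne t ht))).continuousWithinAt) (by simp [angle_self h0]) ?_ ?_ ?_ ⟨hab, le_rfl⟩
  · simpa [uIcc_of_le hab] using intervalIntegral.continuousOn_primitive_interval' hint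
      (left_mem_uIcc (a := a) (b := b))
  · intro t ht
    have hIcc : Icc a b ∈ 𝓝[>] t := Icc_mem_nhdsGT_of_mem ht
    exact intervalIntegral.integral_hasDerivWithinAt_right
      (hint.mono_set (by simp [uIcc_of_le hab, uIcc_of_le ht.1, Icc_subset_Icc_right ht.2.le]))
      ⟨Icc a b, hIcc, hcont.norm.aestronglyMeasurable measurableSet_Icc⟩
      ((hcont t (Ico_subset_Icc_self ht)).norm.mono_of_mem_nhdsWithin hIcc)
  · intro t ht ρ hρ
    have htIcc := Ico_subset_Icc_self ht
    have hsphere : ∀ᶠ s in 𝓝[>] t, ‖γ s‖ = ‖γ t‖ := by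
      filter_upwards [Icc_mem_nhdsGT_of_mem ht] with s hs
      rw [hnorm s hs, hnorm t htIcc]
    refine Eventually.frequently ?_
    filter_upwards [eventually_norm_mul_angle_lt (hderiv t htIcc) hsphere hρ,
      self_mem_nhdsWithin] with s hs (hts : t < s)
    rw [hnorm t htIcc] at hs
    rw [slope_def_field, div_lt_iff₀ (sub_pos.2 hts)]
    linarith [mul_le_mul_of_nonneg_left (angle_le_angle_add_angle (γ a) (γ t) (γ s))
      (norm_nonneg (γ a))]

end

theorem stmt_6_general {E : Type*} [NormedAddCommGroup E] [InnerProductSpace ℝ E]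
    (τ r : ℝ) (hτ : 0 < τ)
    (γ γ' : ℝ → E)
    (hderiv : ∀ t ∈ Set.Icc (0 : ℝ) τ, HasDerivAt γ (γ' t) t)
    (hcont : ContinuousOn γ' (Set.Icc (0 : ℝ) τ))
    (hsphere : ∀ t ∈ Set.Icc (0 : ℝ) τ, ‖γ t‖ = r) :
    τ * ((1 / τ) * ∫ t in (0 : ℝ)..τ, ‖γ' t‖) ≥
      r * Real.arccos (⟪γ 0, γ τ⟫_ℝ / r ^ 2) := by
  have hstart : ‖γ 0‖ = r := hsphere 0 ⟨le_rfl, hτ.le⟩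
  have hend : ‖γ τ‖ = r := hsphere τ ⟨hτ.le, le_rfl⟩
  have hlength := norm_mul_angle_le_integral_norm_deriv hτ.le hderiv hcont
    fun t ht => by rw [hsphere t ht, hstart]
  rw [angle, hstart, hend, ← sq] at hlength
  rwa [← mul_assoc, mul_one_div_cancel hτ.ne', one_mul]

theorem stmt_6 {E : Type*} [NormedAddCommGroup E] [InnerProductSpace ℝ E]
    [FiniteDimensional ℝ E] (τ r : ℝ) (hτ : 0 < τ) (hr : 0 < r)
    (γ γ' : ℝ → E)
    (hderiv : ∀ t ∈ Set.Icc (0 : ℝ) τ, HasDerivAt γ (γ' t) t)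
    (hcont : ContinuousOn γ' (Set.Icc (0 : ℝ) τ))
    (hsphere : ∀ t ∈ Set.Icc (0 : ℝ) τ, ‖γ t‖ = r) :
    τ * ((1 / τ) * ∫ t in (0 : ℝ)..τ, ‖γ' t‖) ≥
      r * Real.arccos (⟪γ 0, γ τ⟫_ℝ / r ^ 2) :=
  stmt_6_general τ r hτ γ γ' hderiv hcont hsphere
end

section
/- Let γ : [0, τ] → E be a continuously differentiable curve in a finite-dimensional real inner product space with ‖γ(t)‖ = r > 0 for all t, and suppose ‖γ'(t)‖ ≤ v for all t with v > 0. Then τ ≥ (r / v) · arccos(⟨γ(0), γ(τ)⟩ / r²). -/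
open scoped InnerProductSpace

theorem stmt_7 {E : Type*} [NormedAddCommGroup E] [InnerProductSpace ℝ E]
    [FiniteDimensional ℝ E] (τ r v : ℝ) (hτ : 0 ≤ τ) (hr : 0 < r) (hv : 0 < v)
    (γ γ' : ℝ → E)
    (hderiv : ∀ t ∈ Set.Icc (0 : ℝ) τ, HasDerivAt γ (γ' t) t)
    (hcont : ContinuousOn γ' (Set.Icc (0 : ℝ) τ))
    (hsphere : ∀ t ∈ Set.Icc (0 : ℝ) τ, ‖γ t‖ = r)
    (hspeed : ∀ t ∈ Set.Icc (0 : ℝ) τ, ‖γ' t‖ ≤ v) :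
    τ ≥ (r / v) * Real.arccos (⟪γ 0, γ τ⟫_ℝ / r ^ 2) := by
  have hr2 : (0:ℝ) < r ^ 2 := by positivity
  have hrne : r ≠ 0 := hr.ne'
  have h0mem : (0:ℝ) ∈ Set.Icc (0:ℝ) τ := ⟨le_refl 0, hτ⟩
  have hτmem : τ ∈ Set.Icc (0:ℝ) τ := ⟨hτ, le_refl τ⟩
  set F : ℝ → ℝ := fun t => ⟪γ 0, γ t⟫_ℝ / r ^ 2 with hFdef
  -- F 0 = 1
  have hF0 : F 0 = 1 := by
    simp only [hFdef]
    rw [real_inner_self_eq_norm_sq, hsphere 0 h0mem]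
    field_simp
  -- derivative of F
  have hFd : ∀ t ∈ Set.Icc (0:ℝ) τ, HasDerivAt F (⟪γ 0, γ' t⟫_ℝ / r ^ 2) t := by
    intro t ht
    have h1 : HasDerivAt (fun s => ⟪γ 0, γ s⟫_ℝ) (⟪γ 0, γ' t⟫_ℝ) t := by
      have := (hasDerivAt_const t (γ 0)).inner ℝ (hderiv t ht)
      simpa using this
    exact h1.div_const _
  have hFcont : ContinuousOn F (Set.Icc (0:ℝ) τ) :=
    fun x hx => (hFd x hx).continuousAt.continuousWithinAt
  -- orthogonality of γ and γ'
  have horth : ∀ x ∈ Set.Ico (0:ℝ) τ, ⟪γ x, γ' x⟫_ℝ = 0 := by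
    intro x hx
    have hxI : x ∈ Set.Icc (0:ℝ) τ := Set.Ico_subset_Icc_self hx
    have h1 : HasDerivWithinAt (fun s => ⟪γ s, γ s⟫_ℝ)
        (⟪γ x, γ' x⟫_ℝ + ⟪γ' x, γ x⟫_ℝ) (Set.Icc (0:ℝ) τ) x :=
      ((hderiv x hxI).inner ℝ (hderiv x hxI)).hasDerivWithinAt
    have h2 : HasDerivWithinAt (fun s => ⟪γ s, γ s⟫_ℝ) 0 (Set.Icc (0:ℝ) τ) x := by
      refine (hasDerivWithinAt_const x _ (r ^ 2)).congr (fun y hy => ?_) ?_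
      · rw [real_inner_self_eq_norm_sq, hsphere y hy]
      · rw [real_inner_self_eq_norm_sq, hsphere x hxI]
    have hu : UniqueDiffWithinAt ℝ (Set.Icc (0:ℝ) τ) x :=
      uniqueDiffOn_Icc (lt_of_le_of_lt hx.1 hx.2) x hxI
    have heq := hu.eq_deriv _ h1 h2
    have hcomm : ⟪γ' x, γ x⟫_ℝ = ⟪γ x, γ' x⟫_ℝ := real_inner_comm _ _
    linarith [heq, hcomm.symm ▸ heq]
  -- main estimate: for every δ > 0, arccos (F τ) ≤ (v/r) τ + δ (τ + 1)
  have main2 : ∀ δ : ℝ, 0 < δ → Real.arccos (F τ) ≤ (v / r) * τ + δ * (τ + 1) := by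
    intro δ hδ
    have hc' : 0 < v / r + δ := by positivity
    rcases le_or_gt τ ((Real.pi - δ) / (v / r + δ)) with hcase | hcase
    · -- fencing on [0, τ]
      have hfcos : ContinuousOn (fun t => Real.cos ((v / r + δ) * t + δ)) (Set.Icc (0:ℝ) τ) :=
        (Real.continuous_cos.comp (by continuity)).continuousOn
      have hfd : ∀ x ∈ Set.Ico (0:ℝ) τ, HasDerivWithinAt (fun t => Real.cos ((v / r + δ) * t + δ))
          (-Real.sin ((v / r + δ) * x + δ) * (v / r + δ)) (Set.Ici x) x := by
        intro x hx
        have hlin : HasDerivAt (fun t : ℝ => (v / r + δ) * t + δ) (v / r + δ) x := by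
          simpa using ((hasDerivAt_id x).const_mul (v / r + δ)).add_const δ
        exact ((Real.hasDerivAt_cos _).comp x hlin).hasDerivWithinAt
      have ha : Real.cos ((v / r + δ) * 0 + δ) ≤ F 0 := by
        rw [hF0]; exact Real.cos_le_one _
      have hBd : ∀ x ∈ Set.Ico (0:ℝ) τ,
          HasDerivWithinAt F (⟪γ 0, γ' x⟫_ℝ / r ^ 2) (Set.Ici x) x :=
        fun x hx => (hFd x (Set.Ico_subset_Icc_self hx)).hasDerivWithinAt
      have hbound : ∀ x ∈ Set.Ico (0:ℝ) τ, Real.cos ((v / r + δ) * x + δ) = F x →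
          -Real.sin ((v / r + δ) * x + δ) * (v / r + δ) < ⟪γ 0, γ' x⟫_ℝ / r ^ 2 := by
        intro x hx heq
        set θ := (v / r + δ) * x + δ with hθdef
        have hθ1 : 0 < θ := by
          have : 0 ≤ (v / r + δ) * x := mul_nonneg hc'.le hx.1
          simp only [hθdef]; linarith
        have hθ2 : θ < Real.pi := by
          have hxlt : x < (Real.pi - δ) / (v / r + δ) := lt_of_lt_of_le hx.2 hcase
          have := (lt_div_iff₀' hc').mp hxlt
          simp only [hθdef]; linarith
        have hsin : 0 < Real.sin θ := Real.sin_pos_of_pos_of_lt_pi hθ1 hθ2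
        have horthx := horth x hx
        have hgx : ‖γ x‖ = r := hsphere x (Set.Ico_subset_Icc_self hx)
        have hg0 : ‖γ 0‖ = r := hsphere 0 h0mem
        have hinner : ⟪γ 0, γ x⟫_ℝ = F x * r ^ 2 := by
          simp only [hFdef]; field_simp
        have h1 : ⟪γ 0, γ' x⟫_ℝ = ⟪γ 0 - F x • γ x, γ' x⟫_ℝ := by
          rw [inner_sub_left, real_inner_smul_left, horthx]; ring
        have hnormsq : ‖γ 0 - F x • γ x‖ ^ 2 = (r * Real.sin θ) ^ 2 := by
          rw [norm_sub_sq_real, real_inner_smul_right, hinner, norm_smul, hg0, hgx]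
          have hFx : F x = Real.cos θ := heq.symm
          rw [hFx]
          simp only [Real.norm_eq_abs]
          rw [mul_pow, sq_abs]
          nlinarith [Real.sin_sq_add_cos_sq θ]
        have hnorm : ‖γ 0 - F x • γ x‖ ≤ r * Real.sin θ := by
          nlinarith [norm_nonneg (γ 0 - F x • γ x), mul_pos hr hsin]
        have h2 : |⟪γ 0 - F x • γ x, γ' x⟫_ℝ| ≤ (r * Real.sin θ) * v := by
          refine (abs_real_inner_le_norm _ _).trans ?_
          have hsp := hspeed x (Set.Ico_subset_Icc_self hx)
          have hnn : (0:ℝ) ≤ r * Real.sin θ := (mul_pos hr hsin).le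
          calc ‖γ 0 - F x • γ x‖ * ‖γ' x‖ ≤ (r * Real.sin θ) * ‖γ' x‖ :=
                mul_le_mul_of_nonneg_right hnorm (norm_nonneg _)
            _ ≤ (r * Real.sin θ) * v := mul_le_mul_of_nonneg_left hsp hnn
        have h5 : -((r * Real.sin θ) * v) ≤ ⟪γ 0, γ' x⟫_ℝ := by
          rw [h1]; exact (abs_le.mp h2).1
        calc -Real.sin θ * (v / r + δ) < -(Real.sin θ * v / r) := by
              have h6 : 0 < Real.sin θ * δ := mul_pos hsin hδ
              have hh : -Real.sin θ * (v / r + δ) = -(Real.sin θ * v / r) - Real.sin θ * δ := by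
                ring
              linarith
          _ = (-((r * Real.sin θ) * v)) / r ^ 2 := by field_simp
          _ ≤ ⟪γ 0, γ' x⟫_ℝ / r ^ 2 := by gcongr
      have key : ∀ ⦃x⦄, x ∈ Set.Icc (0:ℝ) τ →
          Real.cos ((v / r + δ) * x + δ) ≤ F x :=
        image_le_of_deriv_right_lt_deriv_boundary' hfcos hfd ha hFcont hBd hbound
      have h1 := key hτmem
      have hmem : 0 ≤ (v / r + δ) * τ + δ ∧ (v / r + δ) * τ + δ ≤ Real.pi := by
        constructor
        · have : 0 ≤ (v / r + δ) * τ := mul_nonneg hc'.le hτ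
          linarith
        · have := (le_div_iff₀' hc').mp hcase
          linarith
      have h2 : Real.arccos (F τ) ≤ Real.arccos (Real.cos ((v / r + δ) * τ + δ)) := by
        rw [Real.arccos, Real.arccos]
        exact sub_le_sub_left (Real.monotone_arcsin h1) _
      rw [Real.arccos_cos hmem.1 hmem.2] at h2
      calc Real.arccos (F τ) ≤ (v / r + δ) * τ + δ := h2
        _ = (v / r) * τ + δ * (τ + 1) := by ring
    · -- τ is longer than a half-turn
      have hlt : Real.pi - δ < τ * (v / r + δ) := (div_lt_iff₀ hc').mp hcase
      calc Real.arccos (F τ) ≤ Real.pi := Real.arccos_le_pi _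
        _ ≤ (v / r) * τ + δ * (τ + 1) := by nlinarith
  -- pass to the limit δ → 0
  have main : Real.arccos (F τ) ≤ (v / r) * τ := by
    refine le_of_forall_pos_le_add (fun η hη => ?_)
    have hτ1 : (0:ℝ) < τ + 1 := by linarith
    have := main2 (η / (τ + 1)) (by positivity)
    have heq : η / (τ + 1) * (τ + 1) = η := by field_simp
    linarith
  -- conclude
  have hmul := mul_le_mul_of_nonneg_left main (le_of_lt hr)
  have heq2 : r * ((v / r) * τ) = v * τ := by field_simp
  rw [ge_iff_le, div_mul_eq_mul_div, div_le_iff₀ hv]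
  calc r * Real.arccos (⟪γ 0, γ τ⟫_ℝ / r ^ 2) = r * Real.arccos (F τ) := rfl
    _ ≤ r * ((v / r) * τ) := hmul
    _ = τ * v := by rw [heq2]; ring
end

section
/- Let E be a finite-dimensional real inner product space, S ∈ E fixed, and γ : [0,τ] → E a C¹ curve of the form γ(t) = S + V(t), where ⟨S, V(t)⟩ = 0 and ‖V(t)‖ = ρ > 0 for all t, and ‖γ'(t)‖ ≤ v. Then τ ≥ (ρ / v) · arccos(⟨V(0), V(τ)⟩ / ρ²). Moreover ⟨V(0), V(τ)⟩ = ⟨γ(0), γ(τ)⟩ − ‖S‖². -/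
/-!
The angle `ψ t` between `V 0` and `V t` satisfies the spherical triangle inequality
`ψ z ≤ ψ x + ∠(V x, V z)`, and on the sphere of radius `ρ` the angle subtended by a chord is
`2 arcsin (‖V z - V x‖ / 2ρ) ≤ 2 arcsin (v (z - x) / 2ρ)`. The right-hand side has derivative
`v / ρ` at `z = x`, so a comparison argument gives `ψ τ ≤ v τ / ρ`.
-/

open scoped InnerProductSpace

open Real Set Topology

namespace InnerProductGeometry

variable {E : Type*} [NormedAddCommGroup E] [InnerProductSpace ℝ E]

theorem angle_eq_two_mul_arcsin_of_norm_eq {x y : E} (hx : x ≠ 0) (h : ‖x‖ = ‖y‖) :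
    angle x y = 2 * arcsin (‖x - y‖ / (2 * ‖x‖)) := by
  have hr : 0 < ‖x‖ := norm_pos_iff.mpr hx
  have hθ0 := angle_nonneg x y
  have hθπ := angle_le_pi x y
  have hsin : 0 ≤ sin (angle x y / 2) := sin_nonneg_of_nonneg_of_le_pi (by linarith) (by linarith)
  have hcos : cos (angle x y) = 1 - 2 * sin (angle x y / 2) ^ 2 := by
    have hdouble : cos (angle x y) = cos (angle x y / 2) ^ 2 - sin (angle x y / 2) ^ 2 := by
      rw [← cos_two_mul']; ring_nf
    linarith [cos_sq_add_sin_sq (angle x y / 2)]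
  have hchord : ‖x - y‖ = 2 * ‖x‖ * sin (angle x y / 2) := by
    refine (sq_eq_sq₀ (norm_nonneg _) (by positivity)).mp ?_
    have := norm_sub_sq_eq_norm_sq_add_norm_sq_sub_two_mul_norm_mul_norm_mul_cos_angle x y
    rw [← h, hcos] at this
    nlinarith
  rw [hchord, mul_div_cancel_left₀ _ (by positivity),
    arcsin_sin (by linarith [pi_pos]) (by linarith)]
  ring

end InnerProductGeometry

theorem le_mul_sub_of_le_add_of_hasDerivAt {ψ f : ℝ → ℝ} {a b c : ℝ}
    (hψ : ContinuousOn ψ (Icc a b)) (hψa : ψ a ≤ 0) (hf0 : f 0 = 0) (hf : HasDerivAt f c 0)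
    (hstep : ∀ x ∈ Ico a b, ∀ z ∈ Ioc x b, ψ z ≤ ψ x + f (z - x)) :
    ∀ t ∈ Icc a b, ψ t ≤ c * (t - a) := by
  refine image_le_of_liminf_slope_right_le_deriv_boundary hψ (B' := fun _ => c)
    (by simpa using hψa) (by fun_prop)
    (fun x _ => by simpa using ((hasDerivWithinAt_id x (Ici x)).sub_const a).const_mul c) ?_
  intro x hx r hr
  have hfx : HasDerivAt (fun z => f (z - x)) c x :=
    (show HasDerivAt f c (x - x) by rwa [sub_self]).comp_sub_const x x
  have hslope : ∀ᶠ z in 𝓝[>] x, slope (fun z => f (z - x)) x z < r :=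
    (hasDerivAt_iff_tendsto_slope.mp hfx).eventually (gt_mem_nhds hr)
      |>.filter_mono (nhdsWithin_mono x fun z hz => ne_of_gt hz)
  refine ((hslope.and (Ioc_mem_nhdsGT hx.2)).mono fun z ⟨hzr, hz⟩ => ?_).frequently
  refine lt_of_le_of_lt ?_ hzr
  rw [slope_def_field, slope_def_field, sub_self, hf0, sub_zero]
  gcongr
  · linarith [hz.1]
  · linarith [hstep x hx z hz]

open InnerProductGeometry in
theorem angle_le_of_norm_sub_le_mul {E : Type*} [NormedAddCommGroup E] [InnerProductSpace ℝ E]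
    {c : ℝ → E} {a b ρ v : ℝ} (hab : a ≤ b) (hρ : 0 < ρ) (hc : ContinuousOn c (Icc a b))
    (hnorm : ∀ t ∈ Icc a b, ‖c t‖ = ρ)
    (hlip : ∀ x ∈ Icc a b, ∀ z ∈ Icc a b, ‖c z - c x‖ ≤ v * |z - x|) :
    angle (c a) (c b) ≤ v / ρ * (b - a) := by
  have ha : a ∈ Icc a b := ⟨le_rfl, hab⟩
  have hne : ∀ t ∈ Icc a b, c t ≠ 0 := fun t ht =>
    norm_pos_iff.mp (by rw [hnorm t ht]; exact hρ)
  have hcont : ContinuousOn (fun t => angle (c a) (c t)) (Icc a b) := fun t ht =>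
    ContinuousAt.comp_continuousWithinAt (f := fun s => (c a, c s))
      (continuousAt_angle (x := (c a, c t)) (hne a ha) (hne t ht))
      (continuousWithinAt_const.prodMk (hc t ht))
  have hderiv : HasDerivAt (fun h => 2 * arcsin (v * h / (2 * ρ))) (v / ρ) 0 := by
    have := ((hasDerivAt_arcsin (x := v * 0 / (2 * ρ)) (by simp) (by simp)).comp 0
      (((hasDerivAt_id (0 : ℝ)).const_mul v).div_const (2 * ρ))).const_mul 2
    exact this.congr_deriv (by simp [field])
  refine le_mul_sub_of_le_add_of_hasDerivAt hcont (by simp [angle_self (hne a ha)]) (by simp)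
    hderiv ?_ b ⟨hab, le_rfl⟩
  intro x hx z hz
  have hx' : x ∈ Icc a b := Ico_subset_Icc_self hx
  have hz' : z ∈ Icc a b := ⟨hx.1.trans hz.1.le, hz.2⟩
  calc angle (c a) (c z) ≤ angle (c a) (c x) + angle (c x) (c z) := angle_le_angle_add_angle _ _ _
    _ = angle (c a) (c x) + 2 * arcsin (‖c x - c z‖ / (2 * ρ)) := by
      rw [angle_eq_two_mul_arcsin_of_norm_eq (hne x hx') (by rw [hnorm x hx', hnorm z hz']),
        hnorm x hx']
    _ ≤ angle (c a) (c x) + 2 * arcsin (v * (z - x) / (2 * ρ)) := by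
      have := hlip x hx' z hz'
      rw [norm_sub_rev, abs_of_pos (sub_pos.mpr hz.1)] at this
      gcongr

theorem stmt_8_general {E : Type*} [NormedAddCommGroup E] [InnerProductSpace ℝ E]
    (τ ρ v : ℝ) (hτ : 0 ≤ τ) (hρ : 0 < ρ) (hv : 0 < v)
    (S : E) (γ V γ' : ℝ → E)
    (hdecomp : ∀ t ∈ Set.Icc (0 : ℝ) τ, γ t = S + V t)
    (horth : ∀ t ∈ Set.Icc (0 : ℝ) τ, ⟪S, V t⟫_ℝ = 0)
    (hVnorm : ∀ t ∈ Set.Icc (0 : ℝ) τ, ‖V t‖ = ρ)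
    (hderiv : ∀ t ∈ Set.Icc (0 : ℝ) τ, HasDerivAt γ (γ' t) t)
    (hspeed : ∀ t ∈ Set.Icc (0 : ℝ) τ, ‖γ' t‖ ≤ v) :
    τ ≥ (ρ / v) * Real.arccos (⟪V 0, V τ⟫_ℝ / ρ ^ 2) ∧
      ⟪V 0, V τ⟫_ℝ = ⟪γ 0, γ τ⟫_ℝ - ‖S‖ ^ 2 := by
  have h0 : (0 : ℝ) ∈ Icc 0 τ := ⟨le_rfl, hτ⟩
  have hτ' : τ ∈ Icc 0 τ := ⟨hτ, le_rfl⟩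
  have hV : EqOn V (fun t => γ t - S) (Icc 0 τ) := fun t ht => by simp [hdecomp t ht]
  have hγcont : ContinuousOn γ (Icc 0 τ) := fun t ht =>
    (hderiv t ht).continuousAt.continuousWithinAt
  have hVcont : ContinuousOn V (Icc 0 τ) := (hγcont.sub continuousOn_const).congr hV
  have hVlip : ∀ x ∈ Icc 0 τ, ∀ z ∈ Icc 0 τ, ‖V z - V x‖ ≤ v * |z - x| := fun x hx z hz => by
    rw [hV hx, hV hz, sub_sub_sub_cancel_right, ← Real.norm_eq_abs]
    exact (convex_Icc 0 τ).norm_image_sub_le_of_norm_hasDerivWithin_le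
      (fun t ht => (hderiv t ht).hasDerivWithinAt) hspeed hx hz
  have hangle := angle_le_of_norm_sub_le_mul hτ hρ hVcont hVnorm hVlip
  rw [InnerProductGeometry.angle, hVnorm 0 h0, hVnorm τ hτ', ← sq, sub_zero] at hangle
  refine ⟨?_, ?_⟩
  · calc ρ / v * arccos (⟪V 0, V τ⟫_ℝ / ρ ^ 2) ≤ ρ / v * (v / ρ * τ) := by gcongr
      _ = τ := by field_simp
  · rw [hdecomp 0 h0, hdecomp τ hτ', inner_add_left, inner_add_right, inner_add_right,
      real_inner_comm S (V 0), horth 0 h0, horth τ hτ', real_inner_self_eq_norm_sq]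
    ring

theorem stmt_8 {E : Type*} [NormedAddCommGroup E] [InnerProductSpace ℝ E]
    [FiniteDimensional ℝ E] (τ ρ v : ℝ) (hτ : 0 ≤ τ) (hρ : 0 < ρ) (hv : 0 < v)
    (S : E) (γ V γ' : ℝ → E)
    (hdecomp : ∀ t ∈ Set.Icc (0 : ℝ) τ, γ t = S + V t)
    (horth : ∀ t ∈ Set.Icc (0 : ℝ) τ, ⟪S, V t⟫_ℝ = 0)
    (hVnorm : ∀ t ∈ Set.Icc (0 : ℝ) τ, ‖V t‖ = ρ)
    (hderiv : ∀ t ∈ Set.Icc (0 : ℝ) τ, HasDerivAt γ (γ' t) t)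
    (hcont : ContinuousOn γ' (Set.Icc (0 : ℝ) τ))
    (hspeed : ∀ t ∈ Set.Icc (0 : ℝ) τ, ‖γ' t‖ ≤ v) :
    τ ≥ (ρ / v) * Real.arccos (⟪V 0, V τ⟫_ℝ / ρ ^ 2) ∧
      ⟪V 0, V τ⟫_ℝ = ⟪γ 0, γ τ⟫_ℝ - ‖S‖ ^ 2 :=
  stmt_8_general τ ρ v hτ hρ hv S γ V γ' hdecomp horth hVnorm hderiv hspeed
end

section
/- For r, v > 0 and fixed endpoints with inner product c = ⟨γ(0), γ(τ)⟩, and a decomposition c = ‖S‖² + c_V with c_V = ⟨V(0),V(τ)⟩ where ‖V‖² = r² − ‖S‖², the refined bound is tighter: if 0 < ‖S‖ < r and −(r²−‖S‖²) ≤ c − ‖S‖² ≤ r² − ‖S‖² and c − ‖S‖² < r² − ‖S‖², then √(r² − ‖S‖²) · arccos((c − ‖S‖²)/(r² − ‖S‖²)) ≥ r · arccos(c / r²). -/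
theorem stmt_9 (r v s c : ℝ) (hr : 0 < r) (hv : 0 < v) (hs : 0 < s) (hsr : s < r)
    (hlow : -(r ^ 2 - s ^ 2) ≤ c - s ^ 2) (hup : c - s ^ 2 ≤ r ^ 2 - s ^ 2)
    (hstrict : c - s ^ 2 < r ^ 2 - s ^ 2) :
    Real.sqrt (r ^ 2 - s ^ 2) * Real.arccos ((c - s ^ 2) / (r ^ 2 - s ^ 2)) ≥
      r * Real.arccos (c / r ^ 2) := by
  have hrr : (0:ℝ) < r ^ 2 := by positivity
  set t := r ^ 2 - s ^ 2 with ht_def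
  have ht : 0 < t := by nlinarith
  set θ := Real.arccos ((c - s ^ 2) / t) with hθ_def
  have hθ0 : 0 ≤ θ := Real.arccos_nonneg _
  have hθπ : θ ≤ Real.pi := Real.arccos_le_pi _
  have harg1 : -1 ≤ (c - s ^ 2) / t := by rw [le_div_iff₀ ht]; nlinarith
  have harg2 : (c - s ^ 2) / t ≤ 1 := by rw [div_le_one ht]; nlinarith
  have hcosθ : Real.cos θ = (c - s ^ 2) / t := Real.cos_arccos harg1 harg2
  have hc : c - s ^ 2 = t * Real.cos θ := by rw [hcosθ]; field_simp
  set l := Real.sqrt t / r with hl_def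
  have hl0 : 0 ≤ l := by positivity
  have hsqt : Real.sqrt t ≤ r := by
    rw [show r = Real.sqrt (r ^ 2) by rw [Real.sqrt_sq hr.le]]
    exact Real.sqrt_le_sqrt (by nlinarith)
  have hl1 : l ≤ 1 := by rw [hl_def, div_le_one hr]; exact hsqt
  have hl2 : l ^ 2 * r ^ 2 = t := by
    rw [hl_def, div_pow, Real.sq_sqrt ht.le]
    field_simp
  have hmem0 : (0:ℝ) ∈ Set.Icc 0 Real.pi := ⟨le_rfl, Real.pi_pos.le⟩
  have hmemθ : θ / 2 ∈ Set.Icc 0 Real.pi := ⟨by linarith, by linarith [Real.pi_pos]⟩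
  have hkey : l * Real.sin (θ / 2) ≤ Real.sin (l * (θ / 2)) := by
    have h := strictConcaveOn_sin_Icc.concaveOn.2 hmem0 hmemθ
      (by linarith : (0:ℝ) ≤ 1 - l) hl0 (by ring)
    simpa using h
  have hsinθhalf : 0 ≤ Real.sin (θ / 2) :=
    Real.sin_nonneg_of_nonneg_of_le_pi (by linarith) (by linarith)
  have hsinl : 0 ≤ Real.sin (l * (θ / 2)) :=
    le_trans (mul_nonneg hl0 hsinθhalf) hkey
  have hsq : (l * Real.sin (θ / 2)) ^ 2 ≤ Real.sin (l * (θ / 2)) ^ 2 := by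
    have := mul_le_mul hkey hkey (mul_nonneg hl0 hsinθhalf) hsinl
    nlinarith
  have h2 : Real.cos (l * θ) = 1 - 2 * Real.sin (l * (θ / 2)) ^ 2 := by
    have hd := Real.cos_two_mul (l * (θ / 2))
    have hs2 := Real.sin_sq_add_cos_sq (l * (θ / 2))
    have : Real.cos (2 * (l * (θ / 2))) = 1 - 2 * Real.sin (l * (θ / 2)) ^ 2 := by
      linarith
    rw [show l * θ = 2 * (l * (θ / 2)) by ring] ; exact this
  have h3 : Real.cos θ = 1 - 2 * Real.sin (θ / 2) ^ 2 := by
    have hd := Real.cos_two_mul (θ / 2)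
    have hs2 := Real.sin_sq_add_cos_sq (θ / 2)
    nth_rewrite 1 [show θ = 2 * (θ / 2) by ring]
    linarith
  have hmain : t * Real.sin (θ / 2) ^ 2 ≤ r ^ 2 * Real.sin (l * (θ / 2)) ^ 2 := by
    have h := mul_le_mul_of_nonneg_left hsq hrr.le
    nlinarith [h, hl2]
  have hts : r ^ 2 = t + s ^ 2 := by rw [ht_def]; ring
  have hcosl : Real.cos (l * θ) ≤ c / r ^ 2 := by
    rw [le_div_iff₀ hrr]
    have e1 : Real.cos (l * θ) * r ^ 2
        = t + s ^ 2 - 2 * (r ^ 2 * Real.sin (l * (θ / 2)) ^ 2) := by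
      rw [h2, hts]; ring
    have e2 : c = s ^ 2 + t - 2 * (t * Real.sin (θ / 2) ^ 2) := by
      have e := hc; rw [h3] at e; linear_combination e
    linarith [e1, e2, hmain]
  have hlθ0 : 0 ≤ l * θ := mul_nonneg hl0 hθ0
  have hlθπ : l * θ ≤ Real.pi := le_trans (mul_le_of_le_one_left hθ0 hl1) hθπ
  have harccos : Real.arccos (c / r ^ 2) ≤ l * θ := by
    calc Real.arccos (c / r ^ 2) ≤ Real.arccos (Real.cos (l * θ)) := by
          rw [Real.arccos, Real.arccos]
          linarith [Real.monotone_arcsin hcosl]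
      _ = l * θ := Real.arccos_cos hlθ0 hlθπ
  have hrl : r * l = Real.sqrt t := by rw [hl_def]; field_simp
  calc r * Real.arccos (c / r ^ 2) ≤ r * (l * θ) := by
        exact mul_le_mul_of_nonneg_left harccos hr.le
    _ = Real.sqrt t * θ := by rw [← hrl]; ring
end

section
/- Let H(l) be a differentiable family of Hermitian matrices satisfying the Wegner flow dH/dl = [[H_T, H], H], where H_T(l) = Σ_n H_{nn}(l)|n⟩⟨n| is the diagonal part of H(l) in a fixed orthonormal basis. Then the off-diagonal Hilbert–Schmidt norm satisfies d/dl Σ_{n≠m} |H_{nm}|² = −2 Σ_{n,m} (H_{nn} − H_{mm})² |H_{nm}|² ≤ 0. -/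
open Matrix

attribute [local instance] Matrix.normedAddCommGroup Matrix.normedSpace

/-!
A flow of the form `dH/dl = ⁅η, H⁆` with `H` Hermitian preserves the Frobenius norm
`∑ |H_nm|²`, since `tr (⁅η, H⁆ H) = 0`; so the off-diagonal part changes exactly by minus the
change of `∑ H_nn²`. For Wegner's generator `η = ⁅H_T, H⁆` one has `η_nm = (h_n - h_m) H_nm`,
hence `dh_n/dl = 2 ∑_k (h_n - h_k) |H_nk|²`, and symmetrizing `∑_n h_n dh_n/dl` under `n ↔ k`
turns it into `∑ (h_n - h_k)² |H_nk|²`.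
-/

open RCLike

section

variable {ι R : Type*} [Fintype ι]

theorem Fintype.sum_sum_ite_ne [DecidableEq ι] [AddCommGroup R] (f : ι → ι → R) :
    ∑ i, ∑ j, (if i ≠ j then f i j else 0) = ∑ i, ∑ j, f i j - ∑ i, f i i := by
  rw [← Finset.sum_sub_distrib]
  refine Finset.sum_congr rfl fun i _ => ?_
  rw [← Finset.sum_filter, Finset.filter_ne, Finset.sum_erase_eq_sub (Finset.mem_univ i)]

theorem Fintype.two_mul_sum_sum_mul_sub_mul_of_symm [CommRing R] (x : ι → R) {w : ι → ι → R}
    (hw : ∀ i j, w i j = w j i) :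
    2 * ∑ i, ∑ j, x i * (x i - x j) * w i j = ∑ i, ∑ j, (x i - x j) ^ 2 * w i j := by
  have hswap : ∑ i, ∑ j, x j * (x j - x i) * w i j = ∑ i, ∑ j, x i * (x i - x j) * w i j := by
    rw [Finset.sum_comm]
    simp only [hw]
  rw [two_mul]
  nth_rewrite 2 [← hswap]
  simp only [← Finset.sum_add_distrib]
  congr! 2 with i _ j _
  ring

end

namespace Matrix

variable {ι R 𝕜 : Type*} [Fintype ι]

theorem lie_diagonal_apply [DecidableEq ι] [CommRing R] (d : ι → R) (A : Matrix ι ι R) (i j : ι) :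
    ⁅diagonal d, A⁆ i j = (d i - d j) * A i j := by
  rw [Ring.lie_def, sub_apply, diagonal_mul, mul_diagonal, sub_mul, mul_comm (d j)]

theorem lie_lie_diagonal_apply_self [DecidableEq ι] [CommRing R] (d : ι → R) (A : Matrix ι ι R)
    (i : ι) : ⁅⁅diagonal d, A⁆, A⁆ i i = ∑ k, 2 * (d i - d k) * (A i k * A k i) := by
  simp only [Ring.lie_def ⁅diagonal d, A⁆, sub_apply, mul_apply, lie_diagonal_apply,
    ← Finset.sum_sub_distrib]
  congr! 1 with k
  ring

theorem trace_lie_mul_self [CommRing R] (A B : Matrix ι ι R) : trace (⁅B, A⁆ * A) = 0 := by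
  rw [Ring.lie_def, sub_mul, trace_sub, mul_assoc A B A, trace_mul_comm A, sub_self]

namespace IsHermitian

variable [RCLike 𝕜] {A : Matrix ι ι 𝕜}

omit [Fintype ι] in
theorem norm_apply_swap (hA : A.IsHermitian) (i j : ι) : ‖A j i‖ = ‖A i j‖ := by
  rw [← hA.apply i j, norm_star]

omit [Fintype ι] in
theorem apply_mul_apply_swap (hA : A.IsHermitian) (i j : ι) :
    A i j * A j i = ((‖A i j‖ ^ 2 : ℝ) : 𝕜) := by
  rw [← hA.apply j i, ← starRingEnd_apply, RCLike.mul_conj, ofReal_pow]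

theorem sum_sum_star_apply_mul (hA : A.IsHermitian) (D : Matrix ι ι 𝕜) :
    ∑ i, ∑ j, star (A i j) * D i j = trace (D * A) := by
  simp only [trace, diag_apply, mul_apply, hA.apply, mul_comm (A _ _)]

theorem lie_lie_diagonal_diag_apply_self [DecidableEq ι] (hA : A.IsHermitian) (i : ι) :
    ⁅⁅diagonal A.diag, A⁆, A⁆ i i =
      ((∑ k, 2 * (re (A i i) - re (A k k)) * ‖A i k‖ ^ 2 : ℝ) : 𝕜) := by
  simp only [lie_lie_diagonal_apply_self, diag_apply, hA.apply_mul_apply_swap, ofReal_sum,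
    ofReal_mul, ofReal_sub, ofReal_ofNat, hA.coe_re_apply_self]

end IsHermitian

end Matrix

section Flow

variable {ι 𝕜 : Type*} [Fintype ι] [RCLike 𝕜] {H : ℝ → Matrix ι ι 𝕜} {D : Matrix ι ι 𝕜} {l : ℝ}

theorem HasDerivAt.matrix_apply (hH : HasDerivAt H D l) (i j : ι) :
    HasDerivAt (fun s => H s i j) (D i j) l :=
  hasDerivAt_pi.1 (hasDerivAt_pi.1 hH i) j

theorem HasDerivAt.norm_sq_matrix_apply (hH : HasDerivAt H D l) (i j : ι) :
    HasDerivAt (fun s => ‖H s i j‖ ^ 2) (2 * re (star (H l i j) * D i j)) l := by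
  simpa [real_inner_eq_re_inner 𝕜, inner_apply, mul_comm] using (hH.matrix_apply i j).norm_sq

theorem hasDerivAt_sum_sum_norm_sq_of_lie {B : Matrix ι ι 𝕜} (hA : (H l).IsHermitian)
    (hH : HasDerivAt H ⁅B, H l⁆ l) : HasDerivAt (fun s => ∑ i, ∑ j, ‖H s i j‖ ^ 2) 0 l := by
  refine (HasDerivAt.fun_sum fun i _ => HasDerivAt.fun_sum fun j _ =>
    hH.norm_sq_matrix_apply i j).congr_deriv ?_
  simp only [← Finset.mul_sum, ← map_sum, hA.sum_sum_star_apply_mul, trace_lie_mul_self, map_zero,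
    mul_zero]

theorem hasDerivAt_sum_norm_sq_diag_of_wegner [DecidableEq ι] (hA : (H l).IsHermitian)
    (hH : HasDerivAt H ⁅⁅diagonal (H l).diag, H l⁆, H l⁆ l) :
    HasDerivAt (fun s => ∑ i, ‖H s i i‖ ^ 2)
      (2 * ∑ i, ∑ j, (re (H l i i) - re (H l j j)) ^ 2 * ‖H l i j‖ ^ 2) l := by
  refine (HasDerivAt.fun_sum fun i _ => hH.norm_sq_matrix_apply i i).congr_deriv ?_
  rw [← Fintype.two_mul_sum_sum_mul_sub_mul_of_symm _ fun i j => by rw [hA.norm_apply_swap],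
    Finset.mul_sum, Finset.mul_sum]
  congr! 1 with i
  have hstar : star (H l i i) = (re (H l i i) : 𝕜) := by rw [hA.apply, hA.coe_re_apply_self]
  rw [hA.lie_lie_diagonal_diag_apply_self, hstar, ← ofReal_mul, ofReal_re]
  simp only [Finset.mul_sum]
  exact Finset.sum_congr rfl fun j _ => by ring

end Flow

theorem stmt_12 {N : ℕ} (H : ℝ → Matrix (Fin N) (Fin N) ℂ)
    (hherm : ∀ l, (H l).IsHermitian)
    (HT : ℝ → Matrix (Fin N) (Fin N) ℂ)
    (hHT : ∀ l, HT l = Matrix.diagonal fun n => H l n n)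
    (hderiv : ∀ l, HasDerivAt H
      ((HT l * H l - H l * HT l) * H l - H l * (HT l * H l - H l * HT l)) l) :
    ∀ l, HasDerivAt (fun s => ∑ n, ∑ m, if n ≠ m then ‖H s n m‖ ^ 2 else 0)
        (-2 * ∑ n, ∑ m, ((H l n n).re - (H l m m).re) ^ 2 * ‖H l n m‖ ^ 2) l ∧
      -2 * ∑ n, ∑ m, ((H l n n).re - (H l m m).re) ^ 2 * ‖H l n m‖ ^ 2 ≤ 0 := by
  intro l
  have hflow : HasDerivAt H ⁅⁅diagonal (H l).diag, H l⁆, H l⁆ l := hHT l ▸ hderiv l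
  have hoff : (fun s => ∑ n, ∑ m, if n ≠ m then ‖H s n m‖ ^ 2 else 0) =
      fun s => ∑ n, ∑ m, ‖H s n m‖ ^ 2 - ∑ n, ‖H s n n‖ ^ 2 :=
    funext fun s => Fintype.sum_sum_ite_ne _
  refine ⟨?_, ?_⟩
  · rw [hoff]
    refine ((hasDerivAt_sum_sum_norm_sq_of_lie (hherm l) hflow).sub
      (hasDerivAt_sum_norm_sq_diag_of_wegner (hherm l) hflow)).congr_deriv ?_
    simp only [zero_sub, neg_mul, RCLike.re_to_complex]
  · have hnonneg : 0 ≤ ∑ n, ∑ m, ((H l n n).re - (H l m m).re) ^ 2 * ‖H l n m‖ ^ 2 := by positivity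
    linarith
end

section
/- Let L be a diagonalizable linear endomorphism of a finite-dimensional complex vector space V with distinct eigenvalues l₁, …, l_d and eigenprojections P₁, …, P_d, and let v ∈ V. Set I = {i : Pᵢ v ≠ 0} and W = span{Pᵢ v : i ∈ I}. Then for every nondegenerate interval T ⊆ ℝ, W is the smallest subspace of V containing {e^{Lt} v : t ∈ T}: the orbit is contained in W, and any subspace containing the orbit contains W. -/
/-!
The orbit is `∑ᵢ e^{lᵢ t} • Pᵢ v`, so it lies in `W`. Conversely, exponentials with distinct
exponents are linearly independent as functions on any nonempty open set; composing the orbit with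
an arbitrary functional on `V ⧸ W'` therefore shows that every `Pᵢ v` lies in `W'`.
-/

open Complex Matrix

theorem hasDerivAt_cexp_mul_ofReal (l : ℂ) (t : ℝ) :
    HasDerivAt (fun s : ℝ => exp (l * s)) (l * exp (l * t)) t := by
  simpa [mul_comm] using (((hasDerivAt_id t).ofReal_comp).const_mul l).cexp

section ExpSums

variable {ι : Type*} [Fintype ι] (l : ι → ℂ) {U : Set ℝ}

/-- Differentiating an exponential sum multiplies each coefficient by its exponent. -/
theorem sum_mul_cexp_eq_zero_mul_of_isOpen (hU : IsOpen U) {c : ι → ℂ}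
    (h : ∀ t ∈ U, ∑ i, c i * exp (l i * t) = 0) :
    ∀ t ∈ U, ∑ i, l i * c i * exp (l i * t) = 0 := by
  intro t ht
  have hderiv : HasDerivAt (fun s : ℝ => ∑ i, c i * exp (l i * s))
      (∑ i, l i * c i * exp (l i * t)) t := by
    refine HasDerivAt.fun_sum fun i _ => ?_
    rw [show l i * c i * exp (l i * t) = c i * (l i * exp (l i * t)) by ring]
    exact (hasDerivAt_cexp_mul_ofReal (l i) t).const_mul (c i)
  have hzero : (fun s : ℝ => ∑ i, c i * exp (l i * s)) =ᶠ[nhds t] fun _ => 0 :=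
    Filter.eventually_of_mem (hU.mem_nhds ht) h
  exact hderiv.unique ((hasDerivAt_const t 0).congr_of_eventuallyEq hzero)

theorem sum_pow_mul_cexp_eq_zero_of_isOpen (hU : IsOpen U) {c : ι → ℂ}
    (h : ∀ t ∈ U, ∑ i, c i * exp (l i * t) = 0) (k : ℕ) :
    ∀ t ∈ U, ∑ i, l i ^ k * c i * exp (l i * t) = 0 := by
  induction k with
  | zero => simpa using h
  | succ k ih =>
    simpa only [pow_succ', mul_assoc] using sum_mul_cexp_eq_zero_mul_of_isOpen l hU ih

end ExpSums

/-- The `k`-th derivative at `t₀` of `∑ cᵢ e^{lᵢ t}` is `∑ lᵢ^k cᵢ e^{lᵢ t₀}`; these vanishing for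
`k < d` is a Vandermonde system in the unknowns `cᵢ e^{lᵢ t₀}`. -/
theorem linearIndependent_cexp_mul_ofReal {d : ℕ} {l : Fin d → ℂ} (hl : Function.Injective l)
    {U : Set ℝ} (hU : IsOpen U) (hne : U.Nonempty) :
    LinearIndependent ℂ (fun i (t : U) => exp (l i * t)) := by
  rw [Fintype.linearIndependent_iff]
  intro c hc i
  obtain ⟨t₀, ht₀⟩ := hne
  have hsum : ∀ t ∈ U, ∑ i, c i * exp (l i * t) = 0 := fun t ht => by
    simpa using congrFun hc ⟨t, ht⟩
  have hmulVec : (vandermonde l)ᵀ *ᵥ (fun i => c i * exp (l i * t₀)) = 0 := by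
    funext k
    simpa [Matrix.mulVec, Matrix.vandermonde, dotProduct, mul_assoc] using
      sum_pow_mul_cexp_eq_zero_of_isOpen l hU hsum k t₀ ht₀
  have hdet : (vandermonde l)ᵀ.det ≠ 0 := by
    rwa [Matrix.det_transpose, Matrix.det_vandermonde_ne_zero_iff]
  simpa using congrFun (Matrix.eq_zero_of_mulVec_eq_zero hdet hmulVec) i

theorem Submodule.mem_of_linearIndependent_of_sum_smul_mem {K M S ι : Type*} [Field K]
    [AddCommGroup M] [Module K M] [Fintype ι] {f : ι → S → K}
    (hf : LinearIndependent K f) {x : ι → M} {N : Submodule K M}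
    (h : ∀ s, ∑ i, f i s • x i ∈ N) (i : ι) : x i ∈ N := by
  rw [← Submodule.Quotient.mk_eq_zero, ← Module.forall_dual_apply_eq_zero_iff K]
  intro φ
  refine Fintype.linearIndependent_iff.mp hf (fun j => φ (N.mkQ (x j))) ?_ i
  funext s
  have hs : N.mkQ (∑ j, f j s • x j) = 0 := (Submodule.Quotient.mk_eq_zero N).mpr (h s)
  simpa [map_sum, mul_comm] using congrArg φ hs

theorem stmt_16_general {V : Type*} [AddCommGroup V] [Module ℂ V]
    {d : ℕ} (l : Fin d → ℂ) (hl : Function.Injective l)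
    (P : Fin d → (V →ₗ[ℂ] V))
    (v : V) (W : Submodule ℂ V)
    (hW : W = Submodule.span ℂ {x | ∃ i, P i v ≠ 0 ∧ x = P i v})
    (T : Set ℝ) (hT : T.OrdConnected) (a b : ℝ) (ha : a ∈ T) (hb : b ∈ T) (hab : a < b) :
    (∀ t ∈ T, (∑ i, Complex.exp (l i * t) • P i) v ∈ W) ∧
    (∀ W' : Submodule ℂ V, (∀ t ∈ T, (∑ i, Complex.exp (l i * t) • P i) v ∈ W') → W ≤ W') := by
  have horbit (t : ℝ) : (∑ i, exp (l i * t) • P i) v = ∑ i, exp (l i * t) • P i v := by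
    simp [LinearMap.sum_apply]
  have hPW (i : Fin d) : P i v ∈ W := by
    by_cases hi : P i v = 0
    · simp [hi]
    · exact hW ▸ Submodule.subset_span ⟨i, hi, rfl⟩
  refine ⟨fun t _ => horbit t ▸ W.sum_mem fun i _ => W.smul_mem _ (hPW i), fun W' hW' => ?_⟩
  have hIoo : Set.Ioo a b ⊆ T := Set.Ioo_subset_Icc_self.trans (hT.out ha hb)
  have hPW' := Submodule.mem_of_linearIndependent_of_sum_smul_mem
    (linearIndependent_cexp_mul_ofReal hl isOpen_Ioo (Set.nonempty_Ioo.mpr hab))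
    (x := fun i => P i v) (N := W') fun t => horbit t ▸ hW' t (hIoo t.2)
  rw [hW, Submodule.span_le]
  rintro _ ⟨i, -, rfl⟩
  exact hPW' i

theorem stmt_16 {V : Type*} [AddCommGroup V] [Module ℂ V] [FiniteDimensional ℂ V]
    {d : ℕ} (l : Fin d → ℂ) (hl : Function.Injective l)
    (P : Fin d → (V →ₗ[ℂ] V))
    (hsum : ∑ i, P i = LinearMap.id)
    (horth : ∀ i j, P i ∘ₗ P j = if i = j then P i else 0)
    (v : V) (W : Submodule ℂ V)
    (hW : W = Submodule.span ℂ {x | ∃ i, P i v ≠ 0 ∧ x = P i v})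
    (T : Set ℝ) (hT : T.OrdConnected) (a b : ℝ) (ha : a ∈ T) (hb : b ∈ T) (hab : a < b) :
    (∀ t ∈ T, (∑ i, Complex.exp (l i * t) • P i) v ∈ W) ∧
    (∀ W' : Submodule ℂ V, (∀ t ∈ T, (∑ i, Complex.exp (l i * t) • P i) v ∈ W') → W ≤ W') :=
  stmt_16_general l hl P v W hW T hT a b ha hb hab
end

section
/- Let H be a Hermitian operator on a finite-dimensional complex Hilbert space with H|0⟩ = 0 and H|E⟩ = E|E⟩ for orthonormal eigenvectors |0⟩, |E⟩ and E > 0. Let A = (|0⟩⟨E| + |E⟩⟨0|)/√2 and A(t) = e^{iHt} A e^{−iHt}. Then: (i) the Hilbert–Schmidt autocorrelation C(t) = Tr(A† A(t)) equals cos(Et); (ii) the speed ‖[H, A(t)]‖ (Hilbert–Schmidt norm) is constant and equals E; and (iii) for 0 ≤ t ≤ π/E, t · E = arccos(C(t)), i.e., the operator quantum speed limit t ≥ arccos(C(t))/‖[H,A]‖ holds with equality. -/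
/-!
The operators `P = |0⟩⟨E|` and `Q = |E⟩⟨0|` are orthonormal for the Hilbert–Schmidt inner
product, and each is an eigenvector both of the Heisenberg evolution (with phases `e^{∓iEt}`)
and of the commutator with `H` (with eigenvalues `∓E`). Hence `A(t)` and `[H, A(t)]` stay in the
span of `P` and `Q`, and every trace in the statement is a sum of two squared moduli of their
coefficients: `C(t) = (e^{iEt} + e^{-iEt})/2 = cos (Et)` and `‖[H, A(t)]‖² = E²`.
The last claim is `arccos (cos x) = x` on `[0, π]`.
-/

open Matrix

attribute [local instance] Matrix.linftyOpNormedRing Matrix.linftyOpNormedAlgebra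

theorem mul_sub_mul_smul_add_smul {R A : Type*} [CommRing R] [Ring A] [Algebra R A]
    {H P Q : A} {α β : R} (hP : H * P - P * H = α • P) (hQ : H * Q - Q * H = β • Q)
    (x y : R) :
    H * (x • P + y • Q) - (x • P + y • Q) * H = (x * α) • P + (y * β) • Q := by
  simp only [mul_add, add_mul, mul_smul_comm, smul_mul_assoc]
  rw [add_sub_add_comm, ← smul_sub, ← smul_sub, hP, hQ, smul_smul, smul_smul]

namespace Complex

theorem star_inv_sqrt_two_mul_self :
    star ((Real.sqrt 2 : ℂ)⁻¹) * (Real.sqrt 2 : ℂ)⁻¹ = 2⁻¹ := by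
  rw [star_def, conj_mul', norm_inv, norm_real, Real.norm_of_nonneg (Real.sqrt_nonneg 2)]
  norm_cast
  rw [inv_pow, Real.sq_sqrt zero_le_two]
  norm_num

theorem star_exp_ofReal_mul_I_mul_self (θ : ℝ) : star (exp (θ * I)) * exp (θ * I) = 1 := by
  rw [star_def, conj_mul', norm_exp_ofReal_mul_I, ofReal_one, one_pow]

end Complex

namespace Matrix

variable {m : Type*} [Fintype m]

theorem mul_vecMulVec_sub_vecMulVec_mul {R : Type*} [CommRing R] {H : Matrix m m R}
    {a b : m → R} {μ ν : R} (ha : H *ᵥ a = μ • a) (hb : b ᵥ* H = ν • b) :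
    H * vecMulVec a b - vecMulVec a b * H = (μ - ν) • vecMulVec a b := by
  rw [mul_vecMulVec, vecMulVec_mul, ha, hb, smul_vecMulVec, vecMulVec_smul, sub_smul]

theorem IsHermitian.star_vecMul_of_mulVec_eq_smul {H : Matrix m m ℂ} (hH : H.IsHermitian)
    {v : m → ℂ} {r : ℝ} (h : H *ᵥ v = (r : ℂ) • v) :
    star v ᵥ* H = (r : ℂ) • star v := by
  rw [← hH.eq, ← star_mulVec, h, star_smul, Complex.star_def, Complex.conj_ofReal]

theorem trace_conjTranspose_vecMulVec_mul_vecMulVec (a b c d : m → ℂ) :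
    trace ((vecMulVec a (star b))ᴴ * vecMulVec c (star d)) =
      (star a ⬝ᵥ c) * (star d ⬝ᵥ b) := by
  rw [conjTranspose_vecMulVec, star_star, vecMulVec_mul_vecMulVec, vecMulVec_smul,
    trace_smul, trace_vecMulVec, smul_eq_mul, dotProduct_comm b]

theorem trace_conjTranspose_mul_of_orthonormal {u w : m → ℂ} (hu : star u ⬝ᵥ u = 1)
    (hw : star w ⬝ᵥ w = 1) (huw : star u ⬝ᵥ w = 0) (x y x' y' : ℂ) :
    trace ((x • vecMulVec u (star w) + y • vecMulVec w (star u))ᴴ *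
        (x' • vecMulVec u (star w) + y' • vecMulVec w (star u))) =
      star x * x' + star y * y' := by
  have hwu : star w ⬝ᵥ u = 0 := by rw [star_dotProduct, huw, star_zero]
  simp only [conjTranspose_add, conjTranspose_smul, Matrix.add_mul, Matrix.mul_add,
    Matrix.smul_mul, Matrix.mul_smul, trace_add, trace_smul,
    trace_conjTranspose_vecMulVec_mul_vecMulVec, hu, hw, huw, hwu, smul_eq_mul]
  ring

variable [DecidableEq m]

theorem exp_mulVec_of_mulVec_eq_smul {M : Matrix m m ℂ} {v : m → ℂ} {μ : ℂ}
    (h : M *ᵥ v = μ • v) : NormedSpace.exp M *ᵥ v = Complex.exp μ • v := by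
  have hpow (k : ℕ) : M ^ k *ᵥ v = μ ^ k • v := by
    induction k with
    | zero => simp
    | succ k ih => rw [pow_succ, ← mulVec_mulVec, h, mulVec_smul, ih, smul_smul, pow_succ']
  have hM : HasSum (fun k : ℕ => ((k.factorial : ℂ)⁻¹ • M ^ k) *ᵥ v)
      (NormedSpace.exp M *ᵥ v) :=
    (NormedSpace.exp_series_hasSum_exp' (𝕂 := ℂ) M).map (mulVec.addMonoidHomLeft v)
      (continuous_id.matrix_mulVec continuous_const)
  have hμ : HasSum (fun k : ℕ => ((k.factorial : ℂ)⁻¹ • μ ^ k) • v)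
      (Complex.exp μ • v) := by
    rw [Complex.exp_eq_exp_ℂ]
    exact (NormedSpace.exp_series_hasSum_exp' μ).smul_const v
  refine hM.unique (hμ.congr_fun fun k => ?_)
  simp only [smul_mulVec, hpow, smul_smul, smul_eq_mul]

theorem vecMul_exp_of_vecMul_eq_smul {M : Matrix m m ℂ} {v : m → ℂ} {μ : ℂ}
    (h : v ᵥ* M = μ • v) : v ᵥ* NormedSpace.exp M = Complex.exp μ • v := by
  rw [← mulVec_transpose, ← exp_transpose]
  exact exp_mulVec_of_mulVec_eq_smul (by rwa [mulVec_transpose])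

theorem exp_smul_mul_vecMulVec_mul_exp_smul {H : Matrix m m ℂ} {a b : m → ℂ} {μ ν : ℂ}
    (ha : H *ᵥ a = μ • a) (hb : b ᵥ* H = ν • b) (s t : ℂ) :
    NormedSpace.exp (s • H) * vecMulVec a b * NormedSpace.exp (t • H) =
      Complex.exp (s * μ + t * ν) • vecMulVec a b := by
  have ha' : (s • H) *ᵥ a = (s * μ) • a := by rw [smul_mulVec, ha, smul_smul]
  have hb' : b ᵥ* (t • H) = (t * ν) • b := by rw [vecMul_smul, hb, smul_smul]
  rw [mul_vecMulVec, vecMulVec_mul, exp_mulVec_of_mulVec_eq_smul ha',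
    vecMul_exp_of_vecMul_eq_smul hb', smul_vecMulVec, vecMulVec_smul, smul_smul,
    Complex.exp_add]

end Matrix

open Complex in
theorem stmt_19 {n : ℕ} (H : Matrix (Fin n) (Fin n) ℂ) (hH : H.IsHermitian)
    (ψ0 ψE : Fin n → ℂ) (E : ℝ) (hE : 0 < E)
    (hψ0 : H.mulVec ψ0 = 0) (hψE : H.mulVec ψE = (E : ℂ) • ψE)
    (hnorm0 : star ψ0 ⬝ᵥ ψ0 = 1) (hnormE : star ψE ⬝ᵥ ψE = 1)
    (horth : star ψ0 ⬝ᵥ ψE = 0)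
    (A : Matrix (Fin n) (Fin n) ℂ)
    (hA : A = ((Real.sqrt 2)⁻¹ : ℂ) •
      (Matrix.vecMulVec ψ0 (star ψE) + Matrix.vecMulVec ψE (star ψ0)))
    (At : ℝ → Matrix (Fin n) (Fin n) ℂ)
    (hAt : ∀ t, At t = NormedSpace.exp ((Complex.I * t) • H) * A *
      NormedSpace.exp ((-(Complex.I * t)) • H))
    (C : ℝ → ℂ) (hC : ∀ t, C t = Matrix.trace (Aᴴ * At t)) :
    (∀ t, C t = (Real.cos (E * t) : ℂ)) ∧
    (∀ t, Matrix.trace ((H * At t - At t * H)ᴴ * (H * At t - At t * H)) = ((E : ℂ)) ^ 2) ∧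
    (∀ t, 0 ≤ t → t ≤ Real.pi / E → t * E = Real.arccos ((C t).re)) := by
  set P := vecMulVec ψ0 (star ψE)
  set Q := vecMulVec ψE (star ψ0)
  set c : ℂ := ((Real.sqrt 2)⁻¹ : ℂ)
  have hψ0_smul : H *ᵥ ψ0 = ((0 : ℝ) : ℂ) • ψ0 := by simp [hψ0]
  have hψ0_left := hH.star_vecMul_of_mulVec_eq_smul hψ0_smul
  have hψE_left := hH.star_vecMul_of_mulVec_eq_smul hψE
  have hc : star c * c = 2⁻¹ := star_inv_sqrt_two_mul_self
  clear_value c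
  have hAt_span (t : ℝ) :
      At t = (c * exp ((-(E * t) : ℝ) * I)) • P + (c * exp ((E * t : ℝ) * I)) • Q := by
    rw [hAt, hA, Matrix.mul_smul, Matrix.smul_mul, Matrix.mul_add, Matrix.add_mul,
      exp_smul_mul_vecMulVec_mul_exp_smul hψ0_smul hψE_left,
      exp_smul_mul_vecMulVec_mul_exp_smul hψE hψ0_left, smul_add, smul_smul, smul_smul]
    congr 4 <;> push_cast <;> ring
  have hC_cos (t : ℝ) : C t = Real.cos (E * t) := by
    rw [hC, hAt_span, hA, smul_add, trace_conjTranspose_mul_of_orthonormal hnorm0 hnormE horth,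
      ofReal_cos, Complex.cos]
    push_cast
    linear_combination (exp (-(E * t) * I) + exp (E * t * I)) * hc
  refine ⟨hC_cos, fun t => ?_, fun t ht0 htπ => ?_⟩
  · have hE_star : star (E : ℂ) = E := conj_ofReal E
    rw [hAt_span, mul_sub_mul_smul_add_smul (mul_vecMulVec_sub_vecMulVec_mul hψ0_smul hψE_left)
      (mul_vecMulVec_sub_vecMulVec_mul hψE hψ0_left),
      trace_conjTranspose_mul_of_orthonormal hnorm0 hnormE horth]
    simp only [star_mul', star_sub, ofReal_zero, star_zero, hE_star]
    linear_combination (E : ℂ) ^ 2 * (star c * c * (star_exp_ofReal_mul_I_mul_self (-(E * t)) +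
      star_exp_ofReal_mul_I_mul_self (E * t)) + 2 * hc)
  · rw [hC_cos, ofReal_re, Real.arccos_cos (by positivity) ((le_div_iff₀' hE).mp htπ), mul_comm]
end
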